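/- The suboptimality bound ε_N is nonincreasing in N: ε_{N+1} ≤ ε_N for all N ≥ 0. -/

import Mathlib

open Finset

variable {S A : Type*} [Fintype S] [Fintype A] [DecidableEq S] [Nonempty S] [Nonempty A]

/-- Belief distribution after taking the blind action sequence `l` from root state `s`:
the `s`-th row of the product of the transition matrices along `l`. -/
noncomputable def belief (T : A → Matrix S S ℝ) (s : S) (l : List A) : S → ℝ :=
  fun s' => ((l.map T).prod) s s'

/-- Expected one-step cost of action `a` under belief `B`. -/
def beliefCost (C : A → S → ℝ) (B : S → ℝ) (a : A) : ℝ := ∑ s, B s * C a s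

/-- Belief obtained from `B` by one further (blind) transition under action `a`. -/
def beliefStep (T : A → Matrix S S ℝ) (B : S → ℝ) (a : A) : S → ℝ :=
  fun s' => ∑ s, B s * T a s s'

/-- Bellman optimality equation for the sensing-cost MDP `M_k`: at every state
`(s, l)` the value is the minimum, over actions `a`, of the blind continuation and
the sensing continuation. -/
def IsBellmanMk (T : A → Matrix S S ℝ) (C : A → S → ℝ) (α k : ℝ)
    (V : S → List A → ℝ) : Prop :=
  ∀ (s : S) (l : List A),
    V s l = Finset.univ.inf' Finset.univ_nonempty (fun a : A =>
      min (beliefCost C (belief T s l) a + α * V s (l ++ [a]))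
          (beliefCost C (belief T s l) a + k
            + α * ∑ j, beliefStep T (belief T s l) a j * V j []))

/-- Bellman optimality equations for the depth-`N` truncation `M_{k,N}`: below layer `N`
both blind and sensing actions are available; at layer `N` sensing is forced. -/
def IsBellmanMkTrunc (T : A → Matrix S S ℝ) (C : A → S → ℝ) (α k : ℝ) (N : ℕ)
    (V : S → List A → ℝ) : Prop :=
  (∀ (s : S) (l : List A), l.length < N →
    V s l = Finset.univ.inf' Finset.univ_nonempty (fun a : A =>
      min (beliefCost C (belief T s l) a + α * V s (l ++ [a]))
          (beliefCost C (belief T s l) a + k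
            + α * ∑ j, beliefStep T (belief T s l) a j * V j []))) ∧
  (∀ (s : S) (l : List A), l.length = N →
    V s l = Finset.univ.inf' Finset.univ_nonempty (fun a : A =>
      beliefCost C (belief T s l) a + k
        + α * ∑ j, beliefStep T (belief T s l) a j * V j []))
/-- Expected cumulative discounted cost of the blind action sequence `l` from root `s`. -/
noncomputable def Zcost (T : A → Matrix S S ℝ) (C : A → S → ℝ) (α : ℝ)
    (s : S) (l : List A) : ℝ :=
  ∑ i : Fin l.length, α ^ (i : ℕ) * beliefCost C (belief T s (l.take i)) (l.get i)

/-- Zero-sensing-cost always-sense value at belief `B`: `min_a B·Q*(a)`. -/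
noncomputable def VAS0 (Qstar : A → S → ℝ) (B : S → ℝ) : ℝ :=
  Finset.univ.inf' Finset.univ_nonempty (fun a : A => ∑ s, B s * Qstar a s)
/-- The suboptimality bound
`ε_N = max_j [ V*_{M_{k,N}}(j) − min_{i ∈ L^j_{N+1}} (Z(i) + α^{N+1} V_{AS;0}(i)) ]`,
where the layer-(N+1) descendants of `j` are indexed by action sequences of length `N+1`. -/
noncomputable def epsBound (T : A → Matrix S S ℝ) (C : A → S → ℝ) (α : ℝ)
    (Qstar : A → S → ℝ) (N : ℕ) (VN : S → List A → ℝ) : ℝ :=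
  Finset.univ.sup' Finset.univ_nonempty (fun j : S =>
    VN j [] - Finset.univ.inf' Finset.univ_nonempty
      (fun v : Fin (N + 1) → A =>
        Zcost T C α j (List.ofFn v)
          + α ^ (N + 1) * VAS0 Qstar (belief T j (List.ofFn v))))

/-!
Two monotonicities combine. First, `V*_{M_{k,N+1}} ≤ V*_{M_{k,N}}` on the layers `≤ N`: the
Bellman operator of `M_{k,N+1}` is monotone and shifts constants by the factor `α` (beliefs are
stochastic), and at layer `N` its value is at most the forced-sensing value of `M_{k,N}`; so if
`d` is the largest excess of `V*_{M_{k,N+1}}` over `V*_{M_{k,N}}` on the finitely many states of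
depth `≤ N`, then `d ≤ α d`, whence `d ≤ 0`. Second, since `V* ≤ Q*(a)` pointwise,
`VAS0 B ≤ B·C(a) + α VAS0 (B T_a)`, so `Z(i) + α^n VAS0(i)` can only grow along a blind step and the
minimum over layer `N + 2` dominates the one over layer `N + 1`.
-/

set_option linter.unusedSectionVars false

theorem Set.Finite.forall_nonpos_of_bound_mul {X : Type*} {P : Set X} (hP : P.Finite)
    {f : X → ℝ} {α : ℝ} (hα : α < 1)
    (h : ∀ d, (∀ x ∈ P, f x ≤ d) → ∀ x ∈ P, f x ≤ α * d) :
    ∀ x ∈ P, f x ≤ 0 := by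
  intro x hx
  obtain ⟨x₀, hx₀, hmax⟩ := P.exists_max_image f hP ⟨x, hx⟩
  have hx₀_le : f x₀ ≤ α * f x₀ := h (f x₀) hmax x₀ hx₀
  have hx₀_nonpos : f x₀ ≤ 0 := by nlinarith
  exact (hmax x hx).trans hx₀_nonpos

theorem sum_mul_le_sum_mul_add {ι : Type*} [Fintype ι] {b f g : ι → ℝ} {d : ℝ}
    (hb : ∀ i, 0 ≤ b i) (hb_sum : ∑ i, b i = 1) (h : ∀ i, f i ≤ g i + d) :
    ∑ i, b i * f i ≤ ∑ i, b i * g i + d :=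
  calc ∑ i, b i * f i ≤ ∑ i, b i * (g i + d) :=
        sum_le_sum fun i _ => mul_le_mul_of_nonneg_left (h i) (hb i)
    _ = ∑ i, b i * g i + d := by simp only [mul_add, sum_add_distrib, ← sum_mul, hb_sum, one_mul]

theorem Finset.inf'_le_inf'_add {ι : Type*} [Fintype ι] [Nonempty ι] {f g : ι → ℝ} {c : ℝ}
    (h : ∀ i, f i ≤ g i + c) :
    univ.inf' univ_nonempty f ≤ univ.inf' univ_nonempty g + c :=
  sub_le_iff_le_add.mp <| le_inf' _ _ fun i _ =>
    sub_le_iff_le_add.mpr <| (inf'_le _ (mem_univ i)).trans (h i)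

section Beliefs

variable (T : A → Matrix S S ℝ)

theorem belief_nil (s : S) : belief T s [] = Pi.single s 1 := by
  funext s'
  simp [belief, Matrix.one_apply, Pi.single_apply, eq_comm]

theorem belief_append (s : S) (l : List A) (a : A) :
    belief T s (l ++ [a]) = beliefStep T (belief T s l) a := by
  funext s'
  simp [belief, beliefStep, Matrix.mul_apply]

variable {T}

theorem beliefStep_nonneg (hT : ∀ a s s', 0 ≤ T a s s') {B : S → ℝ} (hB : ∀ s, 0 ≤ B s)
    (a : A) (s' : S) : 0 ≤ beliefStep T B a s' :=
  sum_nonneg fun s _ => mul_nonneg (hB s) (hT a s s')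

theorem sum_beliefStep (hT : ∀ a s, ∑ s', T a s s' = 1) (B : S → ℝ) (a : A) :
    ∑ s', beliefStep T B a s' = ∑ s, B s := by
  simp only [beliefStep]
  rw [sum_comm]
  simp only [← mul_sum, hT, mul_one]

theorem belief_nonneg (hT : ∀ a s s', 0 ≤ T a s s') (s : S) (l : List A) (s' : S) :
    0 ≤ belief T s l s' := by
  induction l using List.reverseRecOn generalizing s' with
  | nil => rw [belief_nil]; by_cases h : s' = s <;> simp [h]
  | append_singleton l a ih => rw [belief_append]; exact beliefStep_nonneg hT ih a s'

theorem sum_belief (hT : ∀ a s, ∑ s', T a s s' = 1) (s : S) (l : List A) :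
    ∑ s', belief T s l s' = 1 := by
  induction l using List.reverseRecOn with
  | nil => simp [belief_nil]
  | append_singleton l a ih => rw [belief_append, sum_beliefStep hT, ih]

end Beliefs

section TruncatedValue

variable {T : A → Matrix S S ℝ} {C : A → S → ℝ} {α k : ℝ} {N : ℕ} {V W : S → List A → ℝ}

variable (T C α) in
noncomputable def blindValue (V : S → List A → ℝ) (s : S) (l : List A) (a : A) : ℝ :=
  beliefCost C (belief T s l) a + α * V s (l ++ [a])

variable (T C α k) in
noncomputable def senseValue (V : S → List A → ℝ) (s : S) (l : List A) (a : A) : ℝ :=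
  beliefCost C (belief T s l) a + k + α * ∑ j, beliefStep T (belief T s l) a j * V j []

theorem IsBellmanMkTrunc.eq_of_length_lt (hV : IsBellmanMkTrunc T C α k N V) (s : S)
    {l : List A} (hl : l.length < N) :
    V s l = univ.inf' univ_nonempty fun a =>
      min (blindValue T C α V s l a) (senseValue T C α k V s l a) :=
  hV.1 s l hl

theorem IsBellmanMkTrunc.eq_of_length_eq (hV : IsBellmanMkTrunc T C α k N V) (s : S)
    {l : List A} (hl : l.length = N) :
    V s l = univ.inf' univ_nonempty fun a => senseValue T C α k V s l a :=
  hV.2 s l hl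

theorem blindValue_le_add (hα : 0 ≤ α) {s : S} {l : List A} {a : A} {d : ℝ}
    (h : V s (l ++ [a]) ≤ W s (l ++ [a]) + d) :
    blindValue T C α V s l a ≤ blindValue T C α W s l a + α * d := by
  unfold blindValue
  nlinarith

theorem senseValue_le_add (hα : 0 ≤ α) (hT : ∀ a s s', 0 ≤ T a s s')
    (hT_sum : ∀ a s, ∑ s', T a s s' = 1) {d : ℝ} (h : ∀ j, V j [] ≤ W j [] + d)
    (s : S) (l : List A) (a : A) :
    senseValue T C α k V s l a ≤ senseValue T C α k W s l a + α * d := by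
  have hstep : ∑ j, beliefStep T (belief T s l) a j * V j []
      ≤ ∑ j, beliefStep T (belief T s l) a j * W j [] + d :=
    sum_mul_le_sum_mul_add (beliefStep_nonneg hT (belief_nonneg hT s l) a)
      (by rw [← belief_append, sum_belief hT_sum]) h
  unfold senseValue
  nlinarith

/-- At depth `N`, where `M_{k,N}` forces sensing, the sensing branch of `M_{k,N+1}` alone gives
the bound. -/
theorem IsBellmanMkTrunc.le_add_mul_of_le_add (hα : 0 ≤ α) (hT : ∀ a s s', 0 ≤ T a s s')
    (hT_sum : ∀ a s, ∑ s', T a s s' = 1) (hV : IsBellmanMkTrunc T C α k (N + 1) V)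
    (hW : IsBellmanMkTrunc T C α k N W) {d : ℝ}
    (h : ∀ s (l : List A), l.length ≤ N → V s l ≤ W s l + d)
    (s : S) {l : List A} (hl : l.length ≤ N) :
    V s l ≤ W s l + α * d := by
  have hroot : ∀ j, V j [] ≤ W j [] + d := fun j => h j [] (Nat.zero_le N)
  rw [hV.eq_of_length_lt s (Nat.lt_succ_of_le hl)]
  rcases hl.lt_or_eq with hlt | heq
  · rw [hW.eq_of_length_lt s hlt]
    refine inf'_le_inf'_add fun a => (min_le_min ?_ ?_).trans_eq (min_add_add_right _ _ _)
    · exact blindValue_le_add hα (h s _ (by simpa using hlt))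
    · exact senseValue_le_add hα hT hT_sum hroot s l a
  · rw [hW.eq_of_length_eq s heq]
    exact inf'_le_inf'_add fun a =>
      (min_le_right _ _).trans (senseValue_le_add hα hT hT_sum hroot s l a)

theorem IsBellmanMkTrunc.le_of_succ (hα0 : 0 ≤ α) (hα1 : α < 1) (hT : ∀ a s s', 0 ≤ T a s s')
    (hT_sum : ∀ a s, ∑ s', T a s s' = 1) (hV : IsBellmanMkTrunc T C α k (N + 1) V)
    (hW : IsBellmanMkTrunc T C α k N W) (s : S) {l : List A} (hl : l.length ≤ N) :
    V s l ≤ W s l := by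
  have hfin : {x : S × List A | x.2.length ≤ N}.Finite :=
    (Set.finite_univ.prod (List.finite_length_le A N)).subset fun x hx => ⟨trivial, hx⟩
  have key := hfin.forall_nonpos_of_bound_mul (f := fun x => V x.1 x.2 - W x.1 x.2) hα1
    fun d hd x hx => sub_le_iff_le_add'.mpr <| hV.le_add_mul_of_le_add hα0 hT hT_sum hW
      (fun s l hl => sub_le_iff_le_add'.mp (hd (s, l) hl)) x.1 hx
  exact sub_nonpos.mp (key (s, l) hl)

end TruncatedValue

section AlwaysSense

variable {T : A → Matrix S S ℝ} {C : A → S → ℝ} {α : ℝ} {Vstar : S → ℝ} {Qstar : A → S → ℝ}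

theorem sum_mul_le_VAS0
    (hBellman : ∀ s, Vstar s = univ.inf' univ_nonempty fun a : A => Qstar a s)
    {B : S → ℝ} (hB : ∀ s, 0 ≤ B s) :
    ∑ s, B s * Vstar s ≤ VAS0 Qstar B :=
  le_inf' _ _ fun a _ => sum_le_sum fun s _ =>
    mul_le_mul_of_nonneg_left ((hBellman s).trans_le (inf'_le _ (mem_univ a))) (hB s)

theorem sum_mul_Qstar (hQstar : ∀ a s, Qstar a s = C a s + α * ∑ s', T a s s' * Vstar s')
    (B : S → ℝ) (a : A) :
    ∑ s, B s * Qstar a s = beliefCost C B a + α * ∑ s', beliefStep T B a s' * Vstar s' := by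
  simp only [hQstar, beliefCost, beliefStep, mul_add, sum_add_distrib, mul_sum, sum_mul]
  rw [sum_comm (s := univ) (t := univ) (f := fun s' s => α * (B s * T a s s' * Vstar s'))]
  congr 1
  exact sum_congr rfl fun s _ => sum_congr rfl fun s' _ => by ring

theorem VAS0_le_beliefCost_add (hα : 0 ≤ α) (hT : ∀ a s s', 0 ≤ T a s s')
    (hQstar : ∀ a s, Qstar a s = C a s + α * ∑ s', T a s s' * Vstar s')
    (hBellman : ∀ s, Vstar s = univ.inf' univ_nonempty fun a : A => Qstar a s)
    {B : S → ℝ} (hB : ∀ s, 0 ≤ B s) (a : A) :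
    VAS0 Qstar B ≤ beliefCost C B a + α * VAS0 Qstar (beliefStep T B a) :=
  calc VAS0 Qstar B ≤ ∑ s, B s * Qstar a s := inf'_le _ (mem_univ a)
    _ = beliefCost C B a + α * ∑ s', beliefStep T B a s' * Vstar s' := sum_mul_Qstar hQstar B a
    _ ≤ beliefCost C B a + α * VAS0 Qstar (beliefStep T B a) := by
      gcongr
      exact sum_mul_le_VAS0 hBellman (beliefStep_nonneg hT hB a)

end AlwaysSense

section BlindLayer

variable {T : A → Matrix S S ℝ} {C : A → S → ℝ} {α : ℝ} {Vstar : S → ℝ} {Qstar : A → S → ℝ}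

theorem Zcost_append (s : S) (l : List A) (a : A) :
    Zcost T C α s (l ++ [a]) = Zcost T C α s l + α ^ l.length * beliefCost C (belief T s l) a := by
  unfold Zcost
  rw [← Fin.sum_congr' _ (by simp : l.length + 1 = (l ++ [a]).length), Fin.sum_univ_castSucc]
  simp [List.take_append_of_le_length, Nat.le_of_lt, List.getElem_append_left]

theorem Zcost_add_VAS0_le_append (hα : 0 ≤ α) (hT : ∀ a s s', 0 ≤ T a s s')
    (hQstar : ∀ a s, Qstar a s = C a s + α * ∑ s', T a s s' * Vstar s')
    (hBellman : ∀ s, Vstar s = univ.inf' univ_nonempty fun a : A => Qstar a s)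
    (s : S) (l : List A) (a : A) :
    Zcost T C α s l + α ^ l.length * VAS0 Qstar (belief T s l)
      ≤ Zcost T C α s (l ++ [a]) + α ^ (l.length + 1) * VAS0 Qstar (belief T s (l ++ [a])) := by
  have hstep := mul_le_mul_of_nonneg_left
    (VAS0_le_beliefCost_add hα hT hQstar hBellman (belief_nonneg hT s l) a) (pow_nonneg hα l.length)
  rw [Zcost_append, belief_append, pow_succ]
  linarith

variable (T C α Qstar) in
/-- `min_{i ∈ L^j_n} (Z(i) + α^n V_{AS;0}(i))`, the inner minimum of `epsBound` at `n = N + 1`. -/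
noncomputable def layerBound (j : S) (n : ℕ) : ℝ :=
  univ.inf' univ_nonempty fun v : Fin n → A =>
    Zcost T C α j (List.ofFn v) + α ^ n * VAS0 Qstar (belief T j (List.ofFn v))

theorem layerBound_le_succ (hα : 0 ≤ α) (hT : ∀ a s s', 0 ≤ T a s s')
    (hQstar : ∀ a s, Qstar a s = C a s + α * ∑ s', T a s s' * Vstar s')
    (hBellman : ∀ s, Vstar s = univ.inf' univ_nonempty fun a : A => Qstar a s)
    (j : S) (n : ℕ) :
    layerBound T C α Qstar j n ≤ layerBound T C α Qstar j (n + 1) :=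
  le_inf' _ _ fun v _ => by
    have hv : List.ofFn v = List.ofFn (Fin.init v) ++ [v (Fin.last n)] :=
      List.ofFn_succ' v ▸ List.concat_eq_append
    refine (inf'_le _ (mem_univ (Fin.init v))).trans ?_
    simpa only [List.length_ofFn, hv] using
      Zcost_add_VAS0_le_append hα hT hQstar hBellman j (List.ofFn (Fin.init v)) (v (Fin.last n))

end BlindLayer

theorem epsilon_nonincreasing_general
    (T : A → Matrix S S ℝ) (C : A → S → ℝ) (α k : ℝ)
    (hα0 : 0 < α) (hα1 : α < 1)
    (hTnonneg : ∀ a s s', 0 ≤ T a s s') (hTsum : ∀ a s, ∑ s', T a s s' = 1)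
    (Vstar : S → ℝ) (Qstar : A → S → ℝ)
    (hQstar : ∀ a s, Qstar a s = C a s + α * ∑ s', T a s s' * Vstar s')
    (hBellman : ∀ s, Vstar s =
      Finset.univ.inf' Finset.univ_nonempty (fun a : A => Qstar a s))
    (VN : ℕ → S → List A → ℝ)
    (hVN : ∀ N, IsBellmanMkTrunc T C α k N (VN N)) :
    ∀ N : ℕ, epsBound T C α Qstar (N + 1) (VN (N + 1))
      ≤ epsBound T C α Qstar N (VN N) := by
  intro N
  refine sup'_le _ _ fun j _ => le_trans ?_ (le_sup' _ (mem_univ j))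
  exact sub_le_sub ((hVN (N + 1)).le_of_succ hα0.le hα1 hTnonneg hTsum (hVN N) j (Nat.zero_le N))
    (layerBound_le_succ hα0.le hTnonneg hQstar hBellman j (N + 1))

/-- The suboptimality bound `ε_N` is nonincreasing in the truncation depth:
`ε_{N+1} ≤ ε_N`. -/
theorem epsilon_nonincreasing
    (T : A → Matrix S S ℝ) (C : A → S → ℝ) (α k : ℝ)
    (hα0 : 0 < α) (hα1 : α < 1) (hk : 0 < k)
    (hTnonneg : ∀ a s s', 0 ≤ T a s s') (hTsum : ∀ a s, ∑ s', T a s s' = 1)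
    (Vstar : S → ℝ) (Qstar : A → S → ℝ)
    (hQstar : ∀ a s, Qstar a s = C a s + α * ∑ s', T a s s' * Vstar s')
    (hBellman : ∀ s, Vstar s =
      Finset.univ.inf' Finset.univ_nonempty (fun a : A => Qstar a s))
    (VN : ℕ → S → List A → ℝ)
    (hVN : ∀ N, IsBellmanMkTrunc T C α k N (VN N)) :
    ∀ N : ℕ, epsBound T C α Qstar (N + 1) (VN (N + 1))
      ≤ epsBound T C α Qstar N (VN N) :=
  epsilon_nonincreasing_general T C α k hα0 hα1 hTnonneg hTsum Vstar Qstar hQstar hBellman VN hVN
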